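/- Let Y_1^*, Y_2^*, … be mutually independent real-valued random variables, (r_k)_{k≥1} nonnegative reals, v_k = ∏_{j=1}^{k} 1/(1 + r_j) (v_0 = 1), and S_k^* = Σ_{j=1}^{k} v_{j−1} Y_j^*. Suppose there exist an integer l ≥ 1 and a real q_l > 0 such that for all n ≥ 1 the random variables Y_{n+l}^* and q_l Y_n^* are identically distributed, and r_{n+l} = r_n for all n ≥ 1. Then for every i ≥ 0 and every k ≥ 1, the random variable Δ_{i,k} := S_{il+k}^* − S_{il}^* is identically distributed with (q_l v_l)^i · S_k^*. -/

import Mathlib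

/-!
Shifting the index by `i * l` writes `Δ_{i,k}` as `∑_{n<k} v_{il+n} Y*_{il+n+1}`. Periodicity of
`r` gives `v_{il+n} = v_l^i v_n`, and iterating the periodicity in law gives
`Y*_{il+n+1} ~ q^i Y*_{n+1}`. Both `(Y*_{il+n+1})_n` and `(q^i Y*_{n+1})_n` are independent
families, so they have the same joint law, and `Δ_{i,k}` and `(q v_l)^i S*_k` are the same
measurable function of them.
-/

open MeasureTheory ProbabilityTheory Finset

@[to_additive sum_Icc_one_eq_sum_range]
theorem Finset.prod_Icc_one_eq_prod_range {M : Type*} [CommMonoid M] (f : ℕ → M) (k : ℕ) :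
    ∏ j ∈ Icc 1 k, f j = ∏ j ∈ range k, f (j + 1) := by
  rw [← Ico_add_one_right_eq_Icc, prod_Ico_eq_prod_range, Nat.add_sub_cancel]
  simp only [add_comm]

theorem Function.Periodic.prod_range_mul_add {M : Type*} [CommMonoid M] {f : ℕ → M} {l : ℕ}
    (hf : Function.Periodic f l) (m n : ℕ) :
    ∏ j ∈ range (m * l + n), f j = (∏ j ∈ range l, f j) ^ m * ∏ j ∈ range n, f j := by
  induction m with
  | zero => simp
  | succ m ih =>
    rw [show (m + 1) * l + n = l + (m * l + n) by ring, prod_range_add]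
    have hshift : ∀ x, f (l + x) = f x := fun x => by rw [add_comm, hf]
    simp only [hshift, ih, pow_succ]
    ac_rfl

theorem ProbabilityTheory.IdentDistrib.iterate_const_mul {Ω : Type*} [MeasurableSpace Ω]
    {P : Measure Ω} {X : ℕ → Ω → ℝ} {l : ℕ} {c : ℝ} (hX : ∀ n, AEMeasurable (X n) P)
    (h : ∀ n, IdentDistrib (X (n + l)) (fun ω => c * X n ω) P P) (n m : ℕ) :
    IdentDistrib (X (n + m * l)) (fun ω => c ^ m * X n ω) P P := by
  induction m with
  | zero => simpa using IdentDistrib.refl (hX n)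
  | succ m ih =>
    rw [add_mul, one_mul, ← add_assoc]
    refine (h _).trans ?_
    simpa only [pow_succ', mul_assoc] using ih.const_mul c

theorem stmt14_general {Ω : Type*} [MeasurableSpace Ω] (P : Measure Ω)
    (Ystar : ℕ → Ω → ℝ)
    (hmeas : ∀ i, Measurable (Ystar i))
    (hindep : iIndepFun (fun k : ℕ => Ystar (k + 1)) P)
    (r : ℕ → ℝ)
    (v : ℕ → ℝ) (hv : ∀ k, v k = ∏ j ∈ Finset.Icc 1 k, (1 + r j)⁻¹)
    (Sstar : ℕ → Ω → ℝ)
    (hSstar : ∀ k ω, Sstar k ω = ∑ j ∈ Finset.Icc 1 k, v (j - 1) * Ystar j ω)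
    (l : ℕ) (q : ℝ)
    (hper : ∀ n : ℕ, 1 ≤ n →
      Measure.map (Ystar (n + l)) P = Measure.map (fun ω => q * Ystar n ω) P)
    (hrper : ∀ n : ℕ, 1 ≤ n → r (n + l) = r n) :
    ∀ i : ℕ, ∀ k : ℕ, 1 ≤ k →
      Measure.map (fun ω => Sstar (i * l + k) ω - Sstar (i * l) ω) P =
        Measure.map (fun ω => (q * v l) ^ i * Sstar k ω) P := by
  intro i k _
  have hr : Function.Periodic (fun j => (1 + r (j + 1))⁻¹) l := fun j => by
    simp only [add_right_comm j l, hrper (j + 1) j.succ_pos]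
  have hv_mul : ∀ n, v (i * l + n) = v l ^ i * v n := fun n => by
    simp only [hv, prod_Icc_one_eq_prod_range, hr.prod_range_mul_add]
  have hS : ∀ a ω, Sstar a ω = ∑ n ∈ range a, v n * Ystar (n + 1) ω := fun a ω => by
    simp only [hSstar, sum_Icc_one_eq_sum_range, Nat.add_sub_cancel]
  have hlaw : IdentDistrib (fun ω n => Ystar (i * l + n + 1) ω)
      (fun ω n => q ^ i * Ystar (n + 1) ω) P P := by
    refine IdentDistrib.pi (fun n => ?_) (hindep.precomp (add_right_injective (i * l)))
      (hindep.comp _ fun _ => measurable_const_mul (q ^ i))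
    have hstep : ∀ n, IdentDistrib (Ystar (n + l + 1)) (fun ω => q * Ystar (n + 1) ω) P P :=
      fun n => ⟨(hmeas _).aemeasurable, ((hmeas _).const_mul q).aemeasurable, by
        rw [add_right_comm, hper (n + 1) n.succ_pos]⟩
    simpa only [add_comm n, add_right_comm] using
      IdentDistrib.iterate_const_mul (fun n => (hmeas (n + 1)).aemeasurable) hstep n i
  set φ : (ℕ → ℝ) → ℝ := fun x => ∑ n ∈ range k, v l ^ i * v n * x n
  have hφ : Measurable φ := by fun_prop
  have hlhs : (fun ω => Sstar (i * l + k) ω - Sstar (i * l) ω) =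
      φ ∘ fun ω n => Ystar (i * l + n + 1) ω := funext fun ω => by
    simp only [hS, sum_range_add, add_sub_cancel_left, hv_mul, Function.comp_apply, φ]
  have hrhs : (fun ω => (q * v l) ^ i * Sstar k ω) =
      φ ∘ fun ω n => q ^ i * Ystar (n + 1) ω := funext fun ω => by
    simp only [hS, mul_sum, Function.comp_apply, φ]
    exact sum_congr rfl fun n _ => by ring
  rw [hlhs, hrhs]
  exact (hlaw.comp hφ).map_eq

/-- Lemma 3, first assertion.
Random variables are 1-indexed (index `0` unused): `v k = ∏_{j=1}^{k} 1/(1+r_j)`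
(so `v 0 = 1`) and `S*_k = ∑_{j=1}^{k} v_{j-1} Y*_j` (so `S*_0 = 0`).
Assume `l ≥ 1`, `q_l > 0`, `Y*_{n+l}` is distributed as `q_l Y*_n` and
`r_{n+l} = r_n` for all `n ≥ 1`.  Then for every `i ≥ 0` and `k ≥ 1`, the random
variable `Δ_{i,k} = S*_{il+k} − S*_{il}` has the same law as `(q_l v_l)^i S*_k`. -/
theorem stmt14 {Ω : Type*} [MeasurableSpace Ω] (P : Measure Ω) [IsProbabilityMeasure P]
    (Ystar : ℕ → Ω → ℝ)
    (hmeas : ∀ i, Measurable (Ystar i))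
    (hindep : iIndepFun (fun k : ℕ => Ystar (k + 1)) P)
    (r : ℕ → ℝ) (hr : ∀ k : ℕ, 1 ≤ k → 0 ≤ r k)
    (v : ℕ → ℝ) (hv : ∀ k, v k = ∏ j ∈ Finset.Icc 1 k, (1 + r j)⁻¹)
    (Sstar : ℕ → Ω → ℝ)
    (hSstar : ∀ k ω, Sstar k ω = ∑ j ∈ Finset.Icc 1 k, v (j - 1) * Ystar j ω)
    (l : ℕ) (hl : 1 ≤ l) (q : ℝ) (hq : 0 < q)
    (hper : ∀ n : ℕ, 1 ≤ n →
      Measure.map (Ystar (n + l)) P = Measure.map (fun ω => q * Ystar n ω) P)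
    (hrper : ∀ n : ℕ, 1 ≤ n → r (n + l) = r n) :
    ∀ i : ℕ, ∀ k : ℕ, 1 ≤ k →
      Measure.map (fun ω => Sstar (i * l + k) ω - Sstar (i * l) ω) P =
        Measure.map (fun ω => (q * v l) ^ i * Sstar k ω) P :=
  stmt14_general P Ystar hmeas hindep r v hv Sstar hSstar l q hper hrper
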